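/- Let g̃ ∈ I², g̃' ∈ I², and let h ∈ GL₂(K) be such that v(det h) is even and g̃' = h⁻¹·g̃·h. Then h ∈ I¹. -/

import Mathlib

noncomputable section

/-- The valuation `v` on `K = k((ε))`, with `v 0 = ∞`. -/
def lv {k : Type*} [Field k] (x : LaurentSeries k) : WithTop ℤ := x.orderTop

/-- The uniformizer `ε` of `k((ε))`. -/
def eps (k : Type*) [Field k] : LaurentSeries k := HahnSeries.single (1 : ℤ) 1

/-- The set `I¹` of matrices `[[a,b],[c,d]]` with `v a = v d = m`, `v b ≥ m`, `v c > m`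
for some `m ∈ ℤ`. -/
def I1 (k : Type*) [Field k] : Set (Matrix (Fin 2) (Fin 2) (LaurentSeries k)) :=
  {g | ∃ m : ℤ, lv (g 0 0) = (m : WithTop ℤ) ∧ lv (g 1 1) = (m : WithTop ℤ) ∧
    (m : WithTop ℤ) ≤ lv (g 0 1) ∧ (m : WithTop ℤ) < lv (g 1 0)}

/-- The set `I²` of matrices `[[c,d],[a,b]]` with `v a = m+1`, `v d = m`, `v b ≥ m+1`,
`v c ≥ m+1` for some `m ∈ ℤ`. -/
def I2 (k : Type*) [Field k] : Set (Matrix (Fin 2) (Fin 2) (LaurentSeries k)) :=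
  {g | ∃ m : ℤ, lv (g 1 0) = ((m + 1 : ℤ) : WithTop ℤ) ∧ lv (g 0 1) = (m : WithTop ℤ) ∧
    ((m + 1 : ℤ) : WithTop ℤ) ≤ lv (g 1 1) ∧ ((m + 1 : ℤ) : WithTop ℤ) ≤ lv (g 0 0)}


/-!
Write `m` for the exponent of `g ∈ I²`, so that `v(det g) = 2m + 1`; conjugate matrices have
equal determinants, so `g` and `g'` share their exponent. The `(0,1)` and `(1,1)` entries of
`h g' = g h` express `h₀₀ g'₀₁` and `h₁₀ g'₀₁` through the second column of `h`, and in each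
expression the ultrametric inequality singles out one dominant term. If `v(h₁₁) ≤ v(h₀₁)` this
gives `v(h₀₀) = v(h₁₁) < v(h₁₀)`, that is `h ∈ I¹`. Otherwise it gives
`v(h₁₀) = v(h₀₁) + 1 ≤ v(h₀₀)`, so the antidiagonal dominates `det h` and `v(det h) = 2 v(h₀₁) + 1`
is odd.
-/

theorem coe_add_one_le_of_coe_lt {t : ℤ} {a : WithTop ℤ} (h : (t : WithTop ℤ) < a) :
    ((t + 1 : ℤ) : WithTop ℤ) ≤ a := by
  cases a with
  | top => exact le_top
  | coe s => exact WithTop.coe_le_coe.2 (WithTop.coe_lt_coe.1 h)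

section Valuation

variable {k : Type*} [Field k] {u w x y z : LaurentSeries k}

theorem lv_mul (x y : LaurentSeries k) : lv (x * y) = lv x + lv y :=
  HahnSeries.orderTop_mul x y

theorem lv_mul_eq_coe {a b c : ℤ} (hx : lv x = a) (hy : lv y = b) (hc : a + b = c) :
    lv (x * y) = c := by
  rw [lv_mul, hx, hy, ← WithTop.coe_add, hc]

theorem coe_le_lv_mul {a b c : ℤ} (hx : (a : WithTop ℤ) ≤ lv x) (hy : (b : WithTop ℤ) ≤ lv y)
    (hc : c ≤ a + b) : (c : WithTop ℤ) ≤ lv (x * y) := by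
  rw [lv_mul]
  calc (c : WithTop ℤ) ≤ ↑(a + b) := WithTop.coe_le_coe.2 hc
    _ ≤ lv x + lv y := add_le_add hx hy

theorem lv_sub_of_lt (h : lv y < lv x) : lv (x - y) = lv y := by
  rw [lv, ← neg_sub, HahnSeries.orderTop_neg]
  exact HahnSeries.orderTop_sub h

theorem lv_add_sub_of_lt {a : ℤ} (hx : lv x = a) (hy : ((a + 1 : ℤ) : WithTop ℤ) ≤ lv y)
    (hz : ((a + 1 : ℤ) : WithTop ℤ) ≤ lv z) : lv (x + y - z) = a := by
  have hyz : ((a + 1 : ℤ) : WithTop ℤ) ≤ lv (y - z) :=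
    (le_min hy hz).trans HahnSeries.min_orderTop_le_orderTop_sub
  have hlt : lv x < lv (y - z) := hx ▸ (WithTop.coe_lt_coe.2 (lt_add_one a)).trans_le hyz
  rw [add_sub_assoc]
  exact (HahnSeries.orderTop_add_eq_left hlt).trans hx

theorem coe_le_lv_add_sub {a : ℤ} (hx : (a : WithTop ℤ) ≤ lv x) (hy : (a : WithTop ℤ) ≤ lv y)
    (hz : (a : WithTop ℤ) ≤ lv z) : (a : WithTop ℤ) ≤ lv (x + y - z) :=
  (le_min ((le_min hx hy).trans HahnSeries.min_orderTop_le_orderTop_add) hz).trans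
    HahnSeries.min_orderTop_le_orderTop_sub

theorem lv_eq_of_mul_eq_add_sub (he : u * w = x + y - z) {a b c : ℤ} (hw : lv w = b)
    (hx : lv x = a) (hy : ((a + 1 : ℤ) : WithTop ℤ) ≤ lv y)
    (hz : ((a + 1 : ℤ) : WithTop ℤ) ≤ lv z) (hc : a - b = c) : lv u = c := by
  have huw : lv u + b = a := by rw [← hw, ← lv_mul, he, lv_add_sub_of_lt hx hy hz]
  cases hu : lv u with
  | top => simp [hu] at huw
  | coe n =>
    rw [hu, ← WithTop.coe_add, WithTop.coe_eq_coe] at huw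
    exact WithTop.coe_eq_coe.2 (by omega)

theorem coe_le_lv_of_mul_eq_add_sub (he : u * w = x + y - z) {a b c : ℤ} (hw : lv w = b)
    (hx : (a : WithTop ℤ) ≤ lv x) (hy : (a : WithTop ℤ) ≤ lv y) (hz : (a : WithTop ℤ) ≤ lv z)
    (hc : c ≤ a - b) : (c : WithTop ℤ) ≤ lv u := by
  have huw : (a : WithTop ℤ) ≤ lv u + b := by
    rw [← hw, ← lv_mul, he]
    exact coe_le_lv_add_sub hx hy hz
  cases hu : lv u with
  | top => exact le_top
  | coe n =>
    rw [hu, ← WithTop.coe_add, WithTop.coe_le_coe] at huw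
    exact WithTop.coe_le_coe.2 (by omega)

theorem lv_det_fin_two_of_lt {A : Matrix (Fin 2) (Fin 2) (LaurentSeries k)} {a b c d n : ℤ}
    (h01 : lv (A 0 1) = a) (h10 : lv (A 1 0) = b) (h00 : (c : WithTop ℤ) ≤ lv (A 0 0))
    (h11 : (d : WithTop ℤ) ≤ lv (A 1 1)) (hn : a + b = n) (hlt : n < c + d) :
    lv A.det = n := by
  have hanti : lv (A 0 1 * A 1 0) = n := lv_mul_eq_coe h01 h10 hn
  have hdiag : (n : WithTop ℤ) < lv (A 0 0 * A 1 1) :=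
    (WithTop.coe_lt_coe.2 hlt).trans_le (coe_le_lv_mul h00 h11 le_rfl)
  rw [Matrix.det_fin_two, lv_sub_of_lt (hanti ▸ hdiag), hanti]

end Valuation

section Conjugation

variable {R : Type*} [CommRing R] {g g' h : Matrix (Fin 2) (Fin 2) R}

theorem mul_eq_mul_apply_zero_one (hc : h * g' = g * h) :
    h 0 0 * g' 0 1 = g 0 1 * h 1 1 + g 0 0 * h 0 1 - g' 1 1 * h 0 1 := by
  have h01 := congrFun (congrFun hc 0) 1
  simp only [Matrix.mul_apply, Fin.sum_univ_two] at h01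
  linear_combination h01

theorem mul_eq_mul_apply_one_one (hc : h * g' = g * h) :
    h 1 0 * g' 0 1 = g 1 0 * h 0 1 + g 1 1 * h 1 1 - g' 1 1 * h 1 1 := by
  have h11 := congrFun (congrFun hc 1) 1
  simp only [Matrix.mul_apply, Fin.sum_univ_two] at h11
  linear_combination h11

end Conjugation

def I2At (k : Type*) [Field k] (m : ℤ) : Set (Matrix (Fin 2) (Fin 2) (LaurentSeries k)) :=
  {g | lv (g 1 0) = ((m + 1 : ℤ) : WithTop ℤ) ∧ lv (g 0 1) = (m : WithTop ℤ) ∧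
    ((m + 1 : ℤ) : WithTop ℤ) ≤ lv (g 1 1) ∧ ((m + 1 : ℤ) : WithTop ℤ) ≤ lv (g 0 0)}

section Iwahori

variable {k : Type*} [Field k] {g g' h : Matrix (Fin 2) (Fin 2) (LaurentSeries k)} {m t : ℤ}

theorem lv_det_of_mem_I2At (hg : g ∈ I2At k m) : lv g.det = ↑(2 * m + 1) :=
  lv_det_fin_two_of_lt hg.2.1 hg.1 hg.2.2.2 hg.2.2.1 (by ring) (by omega)

theorem mem_I1_of_lv_one_one_le (hg : g ∈ I2At k m) (hg' : g' ∈ I2At k m) (hc : h * g' = g * h)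
    (ht : lv (h 1 1) = t) (hle : (t : WithTop ℤ) ≤ lv (h 0 1)) : h ∈ I1 k := by
  obtain ⟨hg10, hg01, hg11, hg00⟩ := hg
  obtain ⟨-, hg'01, hg'11, -⟩ := hg'
  have hh10 : ((t + 1 : ℤ) : WithTop ℤ) ≤ lv (h 1 0) :=
    coe_le_lv_of_mul_eq_add_sub (mul_eq_mul_apply_one_one hc) hg'01
      (coe_le_lv_mul hg10.ge hle le_rfl) (coe_le_lv_mul hg11 ht.ge le_rfl)
      (coe_le_lv_mul hg'11 ht.ge le_rfl) (by omega)
  refine ⟨t, ?_, ht, hle, (WithTop.coe_lt_coe.2 (lt_add_one t)).trans_le hh10⟩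
  exact lv_eq_of_mul_eq_add_sub (mul_eq_mul_apply_zero_one hc) hg'01 (lv_mul_eq_coe hg01 ht rfl)
    (coe_le_lv_mul hg00 hle (by omega)) (coe_le_lv_mul hg'11 hle (by omega)) (by omega)

theorem lv_det_of_lv_zero_one_lt (hg : g ∈ I2At k m) (hg' : g' ∈ I2At k m) (hc : h * g' = g * h)
    (ht : lv (h 0 1) = t) (hlt : ((t + 1 : ℤ) : WithTop ℤ) ≤ lv (h 1 1)) :
    lv h.det = ↑(2 * t + 1) := by
  obtain ⟨hg10, hg01, hg11, hg00⟩ := hg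
  obtain ⟨-, hg'01, hg'11, -⟩ := hg'
  have hh10 : lv (h 1 0) = ↑(t + 1) :=
    lv_eq_of_mul_eq_add_sub (mul_eq_mul_apply_one_one hc) hg'01 (lv_mul_eq_coe hg10 ht rfl)
      (coe_le_lv_mul hg11 hlt (by omega)) (coe_le_lv_mul hg'11 hlt (by omega)) (by omega)
  have hh00 : ((t + 1 : ℤ) : WithTop ℤ) ≤ lv (h 0 0) :=
    coe_le_lv_of_mul_eq_add_sub (mul_eq_mul_apply_zero_one hc) hg'01
      (coe_le_lv_mul hg01.ge hlt le_rfl) (coe_le_lv_mul hg00 ht.ge (by omega))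
      (coe_le_lv_mul hg'11 ht.ge (by omega)) (by omega)
  exact lv_det_fin_two_of_lt ht hh10 hh00 hlt (by ring) (by omega)

theorem mem_I1_of_mul_eq_mul (hg : g ∈ I2At k m) (hg' : g' ∈ I2At k m) (hc : h * g' = g * h)
    (heven : ∃ n : ℤ, lv h.det = ↑(2 * n)) : h ∈ I1 k := by
  obtain ⟨n, hn⟩ := heven
  rcases le_or_gt (lv (h 1 1)) (lv (h 0 1)) with hle | hlt
  · have hfin : lv (h 1 1) ≠ ⊤ := fun htop => by
      have h11 : h 1 1 = 0 := HahnSeries.orderTop_eq_top.1 htop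
      have h01 : h 0 1 = 0 := HahnSeries.orderTop_eq_top.1 (top_le_iff.1 (htop ▸ hle))
      rw [Matrix.det_fin_two, h11, h01, mul_zero, zero_mul, sub_self, lv,
        HahnSeries.orderTop_zero] at hn
      exact WithTop.top_ne_coe hn
    obtain ⟨t, ht⟩ := WithTop.ne_top_iff_exists.1 hfin
    exact mem_I1_of_lv_one_one_le hg hg' hc ht.symm (ht ▸ hle)
  · obtain ⟨t, ht⟩ := WithTop.ne_top_iff_exists.1 hlt.ne_top
    have hodd := lv_det_of_lv_zero_one_lt hg hg' hc ht.symm (coe_add_one_le_of_coe_lt (ht ▸ hlt))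
    rw [hn, WithTop.coe_eq_coe] at hodd
    omega

end Iwahori

theorem statement6_general (k : Type*) [Field k]
    (g g' : Matrix (Fin 2) (Fin 2) (LaurentSeries k))
    (hg : g ∈ I2 k) (hg' : g' ∈ I2 k)
    (h : GL (Fin 2) (LaurentSeries k))
    (heven : ∃ m : ℤ, lv h.val.det = ((2 * m : ℤ) : WithTop ℤ))
    (hconj : g' = (h⁻¹).val * g * h.val) :
    h.val ∈ I1 k := by
  obtain ⟨m, hg⟩ := hg
  obtain ⟨m', hg'⟩ := hg'
  have hm : m' = m := by
    have hdet := congrArg lv (congrArg Matrix.det hconj)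
    rw [Matrix.det_units_conj', lv_det_of_mem_I2At hg', lv_det_of_mem_I2At hg,
      WithTop.coe_eq_coe] at hdet
    omega
  subst hm
  refine mem_I1_of_mul_eq_mul hg hg' ?_ heven
  rw [hconj, ← mul_assoc, ← mul_assoc, Units.mul_inv, one_mul]

theorem statement6 (k : Type*) [Field k] [IsAlgClosed k]
    (g g' : Matrix (Fin 2) (Fin 2) (LaurentSeries k))
    (hg : g ∈ I2 k) (hg' : g' ∈ I2 k)
    (h : GL (Fin 2) (LaurentSeries k))
    (heven : ∃ m : ℤ, lv h.val.det = ((2 * m : ℤ) : WithTop ℤ))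
    (hconj : g' = (h⁻¹).val * g * h.val) :
    h.val ∈ I1 k :=
  statement6_general k g g' hg hg' h heven hconj
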